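/- arXiv:1809.02308 — 9 statements merged into one kernel-verified Lean document; each statement's English description precedes it below -/
import Mathlib

section
/- Let Q = (x_{i_1},...,x_{i_ℓ}) be a monomial prime ideal of R = k[x_1,...,x_d] generated by a subset of the variables, and let Φ_m : R^{1/m} → R be the R-linear projection sending x^{a/m} to itself when m divides every coordinate of a and to 0 otherwise. Then for every n ≥ 0, every m ≥ 1, and every 1 ≤ j ≤ m, one has Φ_m((Q^{nm+j})^{1/m}) ⊆ Q^{n+1}. -/
open MvPolynomial

/-- The projection `Φ_m : R^{1/m} → R` under the identification `R^{1/m} ≅ R`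
(`x_i^{1/m} ↦ x_i`, so that an ideal `J^{1/m}` of `R^{1/m}` is identified with the
monomial ideal `J` itself): `Φ_m` sends the monomial `x^a` to `x^{a/m}` if `m` divides
every coordinate of `a`, and to `0` otherwise. -/
noncomputable def Phi (k : Type*) [Field k] (d m : ℕ) :
    MvPolynomial (Fin d) k → MvPolynomial (Fin d) k :=
  fun p => ∑ a ∈ p.support,
    if ∀ i, m ∣ a i then
      monomial (Finsupp.mapRange (· / m) (Nat.zero_div m) a) (coeff a p)
    else 0

section Aux
variable {k : Type*} [Field k] {d : ℕ} (F : Finset (Fin d))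

/-- If the `F`-degree of `b` is at least `N`, then `monomial b c ∈ Q^N`. -/
lemma monomial_mem_pow (N : ℕ) (b : Fin d →₀ ℕ) (c : k) (hb : N ≤ ∑ i ∈ F, b i) :
    monomial b c ∈
      (Ideal.span (X '' (F : Set (Fin d))) : Ideal (MvPolynomial (Fin d) k)) ^ N := by
  induction N generalizing b with
  | zero => simp
  | succ N ih =>
    have h1 : 0 < ∑ i ∈ F, b i := lt_of_lt_of_le (Nat.succ_pos N) hb
    obtain ⟨i, hiF, hbi⟩ : ∃ i ∈ F, 0 < b i := by
      by_contra h
      push_neg at h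
      have : ∑ i ∈ F, b i = 0 := Finset.sum_eq_zero (fun i hi => Nat.le_zero.mp (h i hi))
      omega
    set b' := b - Finsupp.single i 1 with hb'
    have hbb : b' + Finsupp.single i 1 = b := by
      ext j
      simp only [hb', Finsupp.coe_add, Pi.add_apply, Finsupp.coe_tsub, Pi.sub_apply,
        Finsupp.single_apply]
      by_cases hij : i = j
      · subst hij; simp; omega
      · simp [hij]
    have hsum : ∑ j ∈ F, b j = (∑ j ∈ F, b' j) + 1 := by
      calc ∑ j ∈ F, b j = ∑ j ∈ F, (b' j + Finsupp.single i 1 j) := by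
            rw [← hbb]; rfl
        _ = (∑ j ∈ F, b' j) + ∑ j ∈ F, Finsupp.single i 1 j := Finset.sum_add_distrib
        _ = (∑ j ∈ F, b' j) + 1 := by
            congr 1
            simp [Finsupp.single_apply, Finset.sum_ite_eq, hiF]
    have heq : monomial b c = monomial b' c * X i := by
      rw [X, monomial_mul, mul_one, hbb]
    rw [heq, pow_succ]
    exact Ideal.mul_mem_mul (ih b' (by omega))
      (Ideal.subset_span ⟨i, hiF, rfl⟩)

/-- Every monomial in the support of an element of `Q^N` has `F`-degree at least `N`. -/
lemma pow_support (N : ℕ) :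
    ∀ f ∈ (Ideal.span (X '' (F : Set (Fin d))) : Ideal (MvPolynomial (Fin d) k)) ^ N,
      ∀ a ∈ f.support, N ≤ ∑ i ∈ F, a i := by
  have key : ∀ (r s : MvPolynomial (Fin d) k) (M N : ℕ),
      (∀ a ∈ r.support, M ≤ ∑ i ∈ F, a i) → (∀ a ∈ s.support, N ≤ ∑ i ∈ F, a i) →
      ∀ a ∈ (r * s).support, M + N ≤ ∑ i ∈ F, a i := by
    intro r s M N hr hs a ha
    have := MvPolynomial.support_mul r s ha
    rw [Finset.mem_add] at this
    obtain ⟨a₁, h₁, a₂, h₂, rfl⟩ := this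
    have : ∑ i ∈ F, (a₁ + a₂) i = (∑ i ∈ F, a₁ i) + ∑ i ∈ F, a₂ i := by
      simp [Finset.sum_add_distrib]
    rw [this]
    exact Nat.add_le_add (hr a₁ h₁) (hs a₂ h₂)
  have base : ∀ f ∈ (Ideal.span (X '' (F : Set (Fin d))) : Ideal (MvPolynomial (Fin d) k)),
      ∀ a ∈ f.support, 1 ≤ ∑ i ∈ F, a i := by
    intro f hf
    refine Submodule.span_induction ?_ ?_ ?_ ?_ hf
    · rintro _ ⟨i, hiF, rfl⟩ a ha
      rw [MvPolynomial.support_X] at ha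
      simp only [Finset.mem_singleton] at ha
      subst ha
      have : (1 : ℕ) = ∑ j ∈ F, Finsupp.single i 1 j := by
        simp [Finsupp.single_apply, Finset.sum_ite_eq, show i ∈ F from hiF]
      omega
    · intro a ha; simp at ha
    · intro f g _ _ hf hg a ha
      have := Finsupp.support_add ha
      rw [Finset.mem_union] at this
      rcases this with h | h
      · exact hf a h
      · exact hg a h
    · intro c f _ hf a ha
      have := key c f 0 1 (fun _ _ => Nat.zero_le _) hf a ha
      simpa using this
  induction N with
  | zero => intro f _ a _; exact Nat.zero_le _
  | succ N ih =>
    intro f hf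
    rw [pow_succ] at hf
    refine Submodule.mul_induction_on hf ?_ ?_
    · intro r hr s hs
      exact key r s N 1 (ih r hr) (base s hs)
    · intro f g hf hg a ha
      have := Finsupp.support_add ha
      rw [Finset.mem_union] at this
      rcases this with h | h
      · exact hf a h
      · exact hg a h

end Aux

/-- for a monomial prime `Q = (x_i : i ∈ F)`, every `n ≥ 0`, `m ≥ 1` and
`1 ≤ j ≤ m`, one has `Φ_m((Q^{nm+j})^{1/m}) ⊆ Q^{n+1}`. -/
theorem Phi_prime_power_subset (k : Type*) [Field k] (d : ℕ)
    (F : Finset (Fin d)) (Q : Ideal (MvPolynomial (Fin d) k))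
    (hQ : Q = Ideal.span (X '' (F : Set (Fin d))))
    (n m j : ℕ) (hm : 1 ≤ m) (hj1 : 1 ≤ j) (hjm : j ≤ m) :
    ∀ f ∈ Q ^ (n * m + j), Phi k d m f ∈ Q ^ (n + 1) := by
  subst hQ
  intro f hf
  unfold Phi
  refine Ideal.sum_mem _ (fun a ha => ?_)
  split
  · rename_i hdvd
    refine monomial_mem_pow F (n + 1) _ _ ?_
    have hdeg : n * m + j ≤ ∑ i ∈ F, a i := pow_support F (n * m + j) f hf a ha
    have hsum : m * ∑ i ∈ F, (Finsupp.mapRange (· / m) (Nat.zero_div m) a) i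
        = ∑ i ∈ F, a i := by
      rw [Finset.mul_sum]
      refine Finset.sum_congr rfl (fun i _ => ?_)
      simp only [Finsupp.mapRange_apply]
      exact Nat.mul_div_cancel' (hdvd i)
    -- m * s ≥ n*m + 1 ⇒ s ≥ n + 1
    nlinarith [hdeg, hsum, hj1]
  · exact Ideal.zero_mem _
end

section
/- Let (α_n)_{n≥1} be a sequence of real numbers bounded above and satisfying α_n ≥ (m/n)·⌈n/m⌉·α_{⌈n/m⌉} for all positive integers n and m. Then the sequence (α_n) converges to its supremum sup_n α_n. -/
/-- a sequence `(α_n)_{n ≥ 1}` of reals that is bounded above and satisfies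
`α_n ≥ (m/n) ⌈n/m⌉ α_{⌈n/m⌉}` for all positive integers `n, m` converges to its
supremum `sup_{n ≥ 1} α_n`. -/
theorem tendsto_sSup_of_ceil_div_ineq (α : ℕ → ℝ)
    (hb : BddAbove (Set.range fun i : ℕ => α (i + 1)))
    (h : ∀ n m : ℕ, 1 ≤ n → 1 ≤ m →
      α n ≥ ((m : ℝ) / n) * (⌈(n : ℚ) / m⌉₊ : ℝ) * α ⌈(n : ℚ) / m⌉₊) :
    Filter.Tendsto α Filter.atTop
      (nhds (sSup (Set.range fun i : ℕ => α (i + 1)))) := by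
  have hSne : (Set.range fun i : ℕ => α (i + 1)).Nonempty := ⟨α 1, 0, rfl⟩
  set L := sSup (Set.range fun i : ℕ => α (i + 1)) with hL
  have hle : ∀ n, 1 ≤ n → α n ≤ L := by
    intro n hn
    exact le_csSup hb ⟨n - 1, by simp [Nat.sub_add_cancel hn]⟩
  rw [Metric.tendsto_atTop]
  intro ε hε
  obtain ⟨x, ⟨i, rfl⟩, hx2⟩ := exists_lt_of_lt_csSup hSne (show L - ε/2 < L by linarith)
  set k := i + 1 with hkdef
  have hk1 : 1 ≤ k := Nat.le_add_left 1 i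
  obtain ⟨N0, hN0⟩ := exists_nat_gt (2 * k * |α k| / ε)
  refine ⟨max (k^2 + 1) (max N0 1), fun n hn => ?_⟩
  have hn1 : 1 ≤ n := le_trans (le_trans (le_max_right N0 1) (le_max_right _ _)) hn
  have hnk : k^2 + 1 ≤ n := le_trans (le_max_left _ _) hn
  have hnN0 : N0 ≤ n := le_trans (le_trans (le_max_left N0 1) (le_max_right _ _)) hn
  set m := ⌈(n:ℚ)/k⌉₊ with hmdef
  have hkQ : (1:ℚ) ≤ k := by exact_mod_cast hk1
  have hnQ : ((k:ℚ)^2 + 1) ≤ n := by exact_mod_cast hnk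
  have hkpos : (0:ℚ) < k := by linarith
  have h1 : (n:ℚ)/k ≤ m := Nat.le_ceil _
  have h2 : (m:ℚ) < (n:ℚ)/k + 1 := Nat.ceil_lt_add_one (by positivity)
  have hdk : (n:ℚ)/k * k = n := div_mul_cancel₀ _ (ne_of_gt hkpos)
  have hnm : (n:ℚ) ≤ m * k := by
    rw [div_le_iff₀ hkpos] at h1; linarith
  have hmn : (m:ℚ) * k < n + k := by nlinarith
  have hMK : (k:ℚ) < m := by nlinarith
  have hmQpos : (0:ℚ) < m := lt_trans hkpos hMK
  have hceil : ⌈(n:ℚ)/m⌉₊ = k := by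
    rw [Nat.ceil_eq_iff (Nat.one_le_iff_ne_zero.mp hk1)]
    constructor
    · rw [lt_div_iff₀ hmQpos]
      have : ((k - 1 : ℕ) : ℚ) = (k:ℚ) - 1 := by
        push_cast [Nat.cast_sub hk1]; ring
      rw [this]; nlinarith
    · rw [div_le_iff₀ hmQpos]; nlinarith
  have hm1 : 1 ≤ m := by
    have : (1:ℚ) ≤ m := le_trans hkQ hMK.le
    exact_mod_cast this
  have hineq := h n m hn1 hm1
  rw [hceil] at hineq
  -- cast the rational inequalities to ℝ via ℕ
  have hnmN : n ≤ m * k := by exact_mod_cast hnm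
  have hmnN : m * k < n + k := by exact_mod_cast hmn
  have hnmR : (n:ℝ) ≤ (m:ℝ) * k := by exact_mod_cast hnmN
  have hmnR : (m:ℝ) * k < (n:ℝ) + k := by exact_mod_cast hmnN
  have npos : (0:ℝ) < n := by exact_mod_cast hn1
  have kposR : (0:ℝ) < k := by exact_mod_cast hk1
  have key : α n ≥ α k - (k:ℝ)/n * |α k| := by
    rcases le_total 0 (α k) with hpos | hneg
    · have hc : (1:ℝ) ≤ (m:ℝ)/n * k := by
        rw [div_mul_eq_mul_div, le_div_iff₀ npos]; linarith
      have h3 : (k:ℝ)/n * |α k| ≥ 0 := by positivity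
      have h4 : α k ≤ (m:ℝ)/n * k * α k := le_mul_of_one_le_left hpos hc
      linarith
    · rw [abs_of_nonpos hneg]
      have hc : (m:ℝ)/n * k ≤ 1 + (k:ℝ)/n := by
        rw [div_mul_eq_mul_div, div_le_iff₀ npos]
        have : (1 + (k:ℝ)/n) * n = n + k := by field_simp
        linarith
      have h4 : (1 + (k:ℝ)/n) * α k ≤ (m:ℝ)/n * k * α k :=
        mul_le_mul_of_nonpos_right hc hneg
      have h5 : (1 + (k:ℝ)/n) * α k = α k - (k:ℝ)/n * (-α k) := by ring
      linarith
  have hsmall : (k:ℝ)/n * |α k| < ε/2 := by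
    have hNn : (2 * k * |α k| / ε) < n := lt_of_lt_of_le hN0 (by exact_mod_cast hnN0)
    rw [div_lt_iff₀ hε] at hNn
    rw [div_mul_eq_mul_div, div_lt_iff₀ npos]
    linarith
  have hup : α n ≤ L := hle n hn1
  have hdown : L - ε < α n := by
    have : α k - ε/2 < α n := by linarith
    linarith
  rw [Real.dist_eq, abs_lt]
  constructor <;> linarith
end

section
/- Let I be a monomial ideal of R = k[x_1,...,x_d] minimally generated by u monomials x^{a_1},...,x^{a_u}, and for a positive integer m let I^{[m]} denote the ideal generated by x^{m·a_1},...,x^{m·a_u}. If r ≥ u(m-1)+1 then I^r = I^{r-m}·I^{[m]}. -/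
open MvPolynomial

/-!
`I ^ r` is spanned by products of `r` generators. When `r > u (m - 1)`, by pigeonhole some
generator `g i` occurs at least `m` times in such a product; splitting off `g i ^ m` leaves a
product of `r - m` generators, so the product lies in `I ^ (r - m) * I^[m]`. The reverse
inclusion is `I^[m] ≤ I ^ m`.
-/

namespace Ideal

variable {R ι : Type*} [CommSemiring R]

theorem span_range_pow_le_of_forall_prod_mem (g : ι → R) (n : ℕ) {K : Ideal R}
    (h : ∀ f : Fin n → ι, ∏ j, g (f j) ∈ K) : span (Set.range g) ^ n ≤ K := by
  rw [← submodule_span_eq, Submodule.span_pow, submodule_span_eq, span_le]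
  rintro x hx
  obtain ⟨f, rfl⟩ := Set.mem_pow.mp hx
  choose e he using fun j => (f j).2
  simpa [List.prod_ofFn, ← he] using h e

theorem prod_mem_span_range_pow_mul_span_range_pow {σ : Type*} [Fintype σ] [Fintype ι]
    (g : ι → R) (f : σ → ι) {m : ℕ} (hσ : Fintype.card ι * (m - 1) < Fintype.card σ) :
    ∏ j, g (f j) ∈
      span (Set.range g) ^ (Fintype.card σ - m) * span (Set.range fun i => g i ^ m) := by
  classical
  obtain ⟨i, -, hi⟩ := Finset.exists_lt_card_fiber_of_mul_lt_card_of_maps_to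
    (s := Finset.univ) (t := Finset.univ) (f := f) (n := m - 1)
    (fun _ _ => Finset.mem_univ _) (by simpa using hσ)
  obtain ⟨T, hT, hTcard⟩ :=
    Finset.exists_subset_card_eq (s := {j | f j = i}) (n := m) (by omega)
  rw [← Finset.prod_compl_mul_prod T]
  refine mul_mem_mul ?_ ?_
  · rw [← hTcard, ← Finset.card_compl, ← Finset.prod_const]
    exact prod_mem_prod fun j _ => subset_span ⟨f j, rfl⟩
  · have hTi : ∀ j ∈ T, f j = i := fun j hj => (Finset.mem_filter.mp (hT hj)).2
    rw [Finset.prod_congr rfl fun j hj => congrArg g (hTi j hj), Finset.prod_const, hTcard]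
    exact subset_span ⟨i, rfl⟩

theorem span_range_pow_eq_pow_mul_span_range_pow [Fintype ι] (g : ι → R) {m r : ℕ}
    (hr : Fintype.card ι * (m - 1) < r) :
    span (Set.range g) ^ r = span (Set.range g) ^ (r - m) * span (Set.range fun i => g i ^ m) := by
  refine le_antisymm (span_range_pow_le_of_forall_prod_mem g r fun f => ?_) ?_
  · simpa using prod_mem_span_range_pow_mul_span_range_pow g f (by simpa using hr)
  · calc span (Set.range g) ^ (r - m) * span (Set.range fun i => g i ^ m)
        ≤ span (Set.range g) ^ (r - m) * span (Set.range g) ^ m := by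
          gcongr
          exact span_le.mpr <| Set.range_subset_iff.mpr fun i =>
            pow_mem_pow (subset_span (Set.mem_range_self i)) m
      _ ≤ span (Set.range g) ^ r := by
          rw [← pow_add]
          exact pow_le_pow_right (by omega)

end Ideal

theorem pow_eq_pow_mul_bracket_general (k : Type*) [Field k] (d u m r : ℕ)
    (a : Fin u → (Fin d →₀ ℕ))
    (I Im : Ideal (MvPolynomial (Fin d) k))
    (hI : I = Ideal.span (Set.range fun i => monomial (a i) (1 : k)))
    (hIm : Im = Ideal.span (Set.range fun i => monomial (m • a i) (1 : k)))
    (hr : u * (m - 1) + 1 ≤ r) :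
    I ^ r = I ^ (r - m) * Im := by
  have hbracket : (fun i => monomial (m • a i) (1 : k)) = fun i => monomial (a i) 1 ^ m := by
    simp [monomial_pow]
  subst hI hIm
  rw [hbracket]
  exact Ideal.span_range_pow_eq_pow_mul_span_range_pow _ (by simpa using hr)

/-- let `I` be a monomial ideal of `R = k[x_1,…,x_d]` minimally generated
by the `u` monomials `x^{a_1},…,x^{a_u}` (minimality of a monomial generating set means
no generator divides another), and let `I^{[m]}` be the ideal generated by
`x^{m a_1},…,x^{m a_u}`. If `r ≥ u(m-1) + 1` then `I^r = I^{r-m} · I^{[m]}`. -/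
theorem pow_eq_pow_mul_bracket (k : Type*) [Field k] (d u m r : ℕ)
    (a : Fin u → (Fin d →₀ ℕ))
    (I Im : Ideal (MvPolynomial (Fin d) k))
    (hI : I = Ideal.span (Set.range fun i => monomial (a i) (1 : k)))
    (hmin : ∀ i j : Fin u, a i ≤ a j → i = j)
    (hIm : Im = Ideal.span (Set.range fun i => monomial (m • a i) (1 : k)))
    (hm : 1 ≤ m) (hr : u * (m - 1) + 1 ≤ r) :
    I ^ r = I ^ (r - m) * Im :=
  pow_eq_pow_mul_bracket_general k d u m r a I Im hI hIm hr
end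

section
/- Let I be a square-free monomial ideal of R = k[x_1,...,x_d] with I^{(n)} = Q_1^n ∩ ... ∩ Q_s^n for minimal primes Q_j. Suppose that for some fixed integer m ≥ 2 and every n ≥ 0, the projection Φ_m satisfies Φ_m((I^{nm+1})^{1/m}) ⊆ I^{n+1}. Then I^n = I^{(n)} for every positive integer n. -/
open MvPolynomial

/-! A monomial `x^a` lies in `⋂ⱼ (xᵢ : i ∈ Fⱼ)^n` exactly when every `Fⱼ`-degree of `a` is at
least `n`; we show by induction on `n` that such a monomial lies in `I^n`. If all `Fⱼ`-degrees of
`a` are at least `n + 1` and `σ = |supp a|`, then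
`x^{σa} = ∏_{i ∈ supp a} x^{a - eᵢ} · ∏_{i ∈ supp a} xᵢ ∈ I^{σn} · I`, the last factor lying in `I`
because `supp a` meets every `Fⱼ`. Multiplying by a power of `x^a ∈ I^n` gives
`x^{m^σ a} ∈ I^{m^σ n + 1}`, and `σ` applications of `Φ_m`, which sends `x^{mb}` to `x^b`, bring
this down to `x^a ∈ I^{n+1}`. -/

theorem Ideal.pow_mem_pow_mul_add_one_of_le {R : Type*} [CommSemiring R] {I : Ideal R}
    {x : R} {n t N : ℕ} (hx : x ∈ I ^ n) (ht : x ^ t ∈ I ^ (t * n + 1)) (htN : t ≤ N) :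
    x ^ N ∈ I ^ (N * n + 1) := by
  have hrest : x ^ (N - t) ∈ I ^ ((N - t) * n) := by
    rw [mul_comm, pow_mul]
    exact Ideal.pow_mem_pow hx _
  have hsplit : x ^ N = x ^ t * x ^ (N - t) := by rw [← pow_add, Nat.add_sub_cancel' htN]
  have hexp : t * n + 1 + (N - t) * n = N * n + 1 := by
    rw [add_right_comm, ← add_mul, Nat.add_sub_cancel' htN]
  rw [hsplit, ← hexp, pow_add]
  exact Ideal.mul_mem_mul ht hrest

theorem Finset.sum_le_sum_tsub_single_add_one {σ : Type*} (F : Finset σ) (a : σ →₀ ℕ) (i₀ : σ) :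
    ∑ i ∈ F, a i ≤ ∑ i ∈ F, (a - Finsupp.single i₀ 1 : σ →₀ ℕ) i + 1 := by
  classical
  calc ∑ i ∈ F, a i ≤ ∑ i ∈ F, ((a - Finsupp.single i₀ 1 : σ →₀ ℕ) i + Finsupp.single i₀ 1 i) :=
        Finset.sum_le_sum fun i _ => le_tsub_add
    _ = ∑ i ∈ F, (a - Finsupp.single i₀ 1 : σ →₀ ℕ) i + ∑ i ∈ F, Finsupp.single i₀ 1 i :=
        Finset.sum_add_distrib
    _ ≤ ∑ i ∈ F, (a - Finsupp.single i₀ 1 : σ →₀ ℕ) i + 1 := by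
        gcongr
        rw [Finset.sum_congr rfl fun i _ => Finsupp.single_apply, Finset.sum_ite_eq]
        split_ifs <;> simp

namespace MvPolynomial

variable {σ R : Type*} [CommSemiring R]

theorem mem_of_forall_monomial_mem {J : Ideal (MvPolynomial σ R)} {f : MvPolynomial σ R}
    (h : ∀ a ∈ f.support, monomial a 1 ∈ J) : f ∈ J := by
  rw [f.as_sum]
  refine J.sum_mem fun a ha => ?_
  rw [← mul_one (coeff a f), ← C_mul_monomial]
  exact J.mul_mem_left _ (h a ha)

theorem span_X_image_pow_le (F : Finset σ) (n : ℕ) :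
    Ideal.span (X '' (F : Set σ)) ^ n ≤
      Ideal.span ((monomial · (1 : R)) '' {a | n ≤ ∑ i ∈ F, a i}) := by
  classical
  induction n with
  | zero =>
    rw [pow_zero, Ideal.one_eq_top, top_le_iff, Ideal.eq_top_iff_one]
    exact Ideal.subset_span ⟨0, Nat.zero_le _, rfl⟩
  | succ n ih =>
    have hX : Ideal.span (X '' (F : Set σ)) ≤
        Ideal.span ((monomial · (1 : R)) '' {a | 1 ≤ ∑ i ∈ F, a i}) := by
      refine Ideal.span_mono ?_
      rintro _ ⟨i, hi, rfl⟩
      refine ⟨Finsupp.single i 1, ?_, rfl⟩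
      simp [Finsupp.single_apply, Finset.mem_coe.mp hi]
    rw [pow_succ]
    refine (Ideal.mul_mono ih hX).trans ?_
    rw [Ideal.span_mul_span']
    refine Ideal.span_mono ?_
    rintro _ ⟨_, ⟨a, ha, rfl⟩, _, ⟨b, hb, rfl⟩, rfl⟩
    refine ⟨a + b, ?_, by simp⟩
    simpa [Finset.sum_add_distrib] using Nat.add_le_add ha hb

theorem le_sum_of_mem_span_X_image_pow {F : Finset σ} {n : ℕ} {f : MvPolynomial σ R}
    (hf : f ∈ Ideal.span (X '' (F : Set σ)) ^ n) {a : σ →₀ ℕ} (ha : a ∈ f.support) :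
    n ≤ ∑ i ∈ F, a i := by
  obtain ⟨b, hb, hba⟩ := mem_ideal_span_monomial_image.mp (span_X_image_pow_le F n hf) a ha
  exact hb.trans (Finset.sum_le_sum fun i _ => hba i)

theorem prod_X_support_mem_iInf_span_X_image {ι : Type*} {F : ι → Set σ} {a : σ →₀ ℕ}
    (h : ∀ j, ∃ i ∈ F j, a i ≠ 0) :
    ∏ i ∈ a.support, (X i : MvPolynomial σ R) ∈ ⨅ j, Ideal.span (X '' F j) := by
  refine Submodule.mem_iInf _ |>.mpr fun j => ?_
  obtain ⟨i, hiF, hia⟩ := h j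
  exact Ideal.mem_of_dvd _ (Finset.dvd_prod_of_mem _ (Finsupp.mem_support_iff.mpr hia))
    (Ideal.subset_span ⟨i, hiF, rfl⟩)

theorem monomial_one_pow_card_support (a : σ →₀ ℕ) :
    monomial a (1 : R) ^ a.support.card =
      (∏ i ∈ a.support, monomial (a - Finsupp.single i 1) (1 : R)) *
        ∏ i ∈ a.support, (X i : MvPolynomial σ R) := by
  rw [← Finset.prod_mul_distrib, ← Finset.prod_const]
  refine Finset.prod_congr rfl fun i hi => ?_
  have hle : Finsupp.single i 1 ≤ a :=
    Finsupp.single_le_iff.mpr (Nat.one_le_iff_ne_zero.mpr (Finsupp.mem_support_iff.mp hi))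
  rw [X, monomial_mul, one_mul, tsub_add_cancel_of_le hle]

end MvPolynomial

theorem Phi_monomial_one_pow (k : Type*) [Field k] {d m : ℕ} (hm : m ≠ 0) (c : Fin d →₀ ℕ) :
    Phi k d m (monomial c 1 ^ m) = monomial c 1 := by
  classical
  have hdiv : Finsupp.mapRange (· / m) (Nat.zero_div m) (m • c) = c := by
    ext i
    simp [Nat.mul_div_cancel_left _ (Nat.pos_of_ne_zero hm)]
  rw [monomial_pow, one_pow, Phi, support_monomial, if_neg one_ne_zero, Finset.sum_singleton,
    if_pos fun i => by simp, hdiv, coeff_monomial, if_pos rfl]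

section Descent

variable {k : Type*} [Field k] {d m : ℕ} {I : Ideal (MvPolynomial (Fin d) k)}

theorem monomial_mem_pow_succ_of_pow_pow_mem (hm : m ≠ 0)
    (hPhi : ∀ n : ℕ, ∀ f ∈ I ^ (n * m + 1), Phi k d m f ∈ I ^ (n + 1))
    {c : Fin d →₀ ℕ} {n : ℕ} (e : ℕ) (h : monomial c (1 : k) ^ m ^ e ∈ I ^ (m ^ e * n + 1)) :
    monomial c (1 : k) ∈ I ^ (n + 1) := by
  induction e with
  | zero => simpa using h
  | succ e ih =>
    rw [monomial_pow, one_pow] at h ih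
    have hroot := hPhi (m ^ e * n) (monomial (m ^ e • c) (1 : k) ^ m) (by
      rwa [monomial_pow, one_pow, smul_smul, ← pow_succ', mul_right_comm, ← pow_succ])
    exact ih (Phi_monomial_one_pow k hm _ ▸ hroot)

theorem monomial_mem_pow_succ_of_pow_mem (hm : 2 ≤ m)
    (hPhi : ∀ n : ℕ, ∀ f ∈ I ^ (n * m + 1), Phi k d m f ∈ I ^ (n + 1))
    {c : Fin d →₀ ℕ} {n t : ℕ} (hc : monomial c (1 : k) ∈ I ^ n)
    (ht : monomial c (1 : k) ^ t ∈ I ^ (t * n + 1)) :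
    monomial c (1 : k) ∈ I ^ (n + 1) :=
  monomial_mem_pow_succ_of_pow_pow_mem (by omega) hPhi t
    (Ideal.pow_mem_pow_mul_add_one_of_le hc ht (Nat.lt_pow_self hm).le)

end Descent

theorem monomial_mem_pow_of_le_sum {k : Type*} [Field k] {d m : ℕ} (hm : 2 ≤ m) {ι : Type*}
    {F : ι → Finset (Fin d)} {I : Ideal (MvPolynomial (Fin d) k)}
    (hI : I = ⨅ j, Ideal.span (X '' (F j : Set (Fin d))))
    (hPhi : ∀ n : ℕ, ∀ f ∈ I ^ (n * m + 1), Phi k d m f ∈ I ^ (n + 1))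
    {n : ℕ} {a : Fin d →₀ ℕ} (ha : ∀ j, n ≤ ∑ i ∈ F j, a i) :
    monomial a (1 : k) ∈ I ^ n := by
  induction n generalizing a with
  | zero => simp [Ideal.one_eq_top]
  | succ n ih =>
    have hsupp : ∀ j, ∃ i ∈ (F j : Set (Fin d)), a i ≠ 0 := fun j =>
      Finset.exists_ne_zero_of_sum_ne_zero (by have := ha j; omega)
    have hpieces : ∀ i ∈ a.support, monomial (a - Finsupp.single i 1) (1 : k) ∈ I ^ n :=
      fun i _ => ih fun j => by
        have := (F j).sum_le_sum_tsub_single_add_one a i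
        have := ha j
        omega
    have hpow : monomial a (1 : k) ^ a.support.card ∈ I ^ (a.support.card * n + 1) := by
      rw [monomial_one_pow_card_support, pow_succ]
      refine Ideal.mul_mem_mul ?_ (hI ▸ prod_X_support_mem_iInf_span_X_image hsupp)
      rw [mul_comm, pow_mul, ← Finset.prod_const]
      exact Ideal.prod_mem_prod hpieces
    exact monomial_mem_pow_succ_of_pow_mem hm hPhi (ih fun j => (ha j).trans' n.le_succ) hpow

theorem ordinary_eq_symbolic_of_Phi_general (k : Type*) [Field k] (d s : ℕ)
    (F : Fin s → Finset (Fin d))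
    (Q : Fin s → Ideal (MvPolynomial (Fin d) k))
    (hQ : ∀ j, Q j = Ideal.span (X '' (F j : Set (Fin d))))
    (I : Ideal (MvPolynomial (Fin d) k)) (hI : I = ⨅ j, Q j)
    (m : ℕ) (hm : 2 ≤ m)
    (hPhi : ∀ n : ℕ, ∀ f ∈ I ^ (n * m + 1), Phi k d m f ∈ I ^ (n + 1)) :
    ∀ n : ℕ, 1 ≤ n → I ^ n = ⨅ j, Q j ^ n := by
  intro n _
  refine le_antisymm (le_iInf fun j => Ideal.pow_right_mono (hI ▸ iInf_le Q j) n) ?_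
  intro f hf
  refine mem_of_forall_monomial_mem fun a ha => ?_
  refine monomial_mem_pow_of_le_sum hm (hI.trans (iInf_congr hQ)) hPhi fun j => ?_
  exact le_sum_of_mem_span_X_image_pow (hQ j ▸ (Submodule.mem_iInf _).mp hf j) ha

/-- let `I` be a square-free monomial ideal with minimal primes
`Q_1,…,Q_s` and symbolic powers `I^{(n)} = ⋂_j Q_j^n`. If for some fixed `m ≥ 2` and
every `n ≥ 0` one has `Φ_m((I^{nm+1})^{1/m}) ⊆ I^{n+1}`, then `I^n = I^{(n)}` for
every positive integer `n`. -/
theorem ordinary_eq_symbolic_of_Phi (k : Type*) [Field k] (d s : ℕ)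
    (F : Fin s → Finset (Fin d))
    (Q : Fin s → Ideal (MvPolynomial (Fin d) k))
    (hQ : ∀ j, Q j = Ideal.span (X '' (F j : Set (Fin d))))
    (I : Ideal (MvPolynomial (Fin d) k)) (hI : I = ⨅ j, Q j)
    (hmin : I.minimalPrimes = Set.range Q)
    (m : ℕ) (hm : 2 ≤ m)
    (hPhi : ∀ n : ℕ, ∀ f ∈ I ^ (n * m + 1), Phi k d m f ∈ I ^ (n + 1)) :
    ∀ n : ℕ, 1 ≤ n → I ^ n = ⨅ j, Q j ^ n :=
  ordinary_eq_symbolic_of_Phi_general k d s F Q hQ I hI m hm hPhi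
end

section
/- Let I be a square-free monomial ideal of R = k[x_1,...,x_d] with μ(I) minimal monomial generators. If I^n = I^{(n)} for every n ≤ ⌈μ(I)/2⌉, then I^n = I^{(n)} for every positive integer n. -/
/-!
In exponent vectors, `x^b ∈ I^n` iff `b` dominates a sum of `n` generators of `I`, and
`x^b ∈ I^{(n)}` iff `b` has degree at least `n` in the variables of every `Q_j`. Suppose
`I^n = I^{(n)}` and `μ(I) ≤ 2n`, and let `c` satisfy the symbolic condition for `n + 1`.
Removing one variable `x_v` from `c` keeps the symbolic condition for `n`, so `n` generators with
sum `s` lie below `c - e_v`. If `n + 1` generators lie below `c' = 2c - s`, then with those `n`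
they are `2n + 1 > μ(I)` generators with sum at most `2c`; a repeated generator `g` has `g ≤ c`,
and counting degrees shows that `c - g` satisfies the symbolic condition for `n`, so `n + 1`
generators lie below `c`. As `c' v > c v`, iterating reduces the claim to vectors `c` that are
at least `n + 1` on the support of a fixed square-free generator `g₀ ≤ c`, where `(n + 1) g₀ ≤ c`.
-/

open MvPolynomial Finset

section

variable {σ : Type*}

namespace Finsupp

noncomputable def degreeOn (F : Finset σ) : (σ →₀ ℕ) →+ ℕ := ∑ i ∈ F, applyAddHom i

variable {F : Finset σ}

theorem degreeOn_apply (b : σ →₀ ℕ) : degreeOn F b = ∑ i ∈ F, b i := by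
  simp [degreeOn]

theorem degreeOn_mono : Monotone (degreeOn F) := fun _ _ h => by
  simp only [degreeOn_apply]
  exact Finset.sum_le_sum fun i _ => h i

theorem degreeOn_single_of_mem {i : σ} (hi : i ∈ F) : degreeOn F (single i 1) = 1 := by
  classical
  simp [degreeOn_apply, single_apply, hi]

theorem degreeOn_single_le (i : σ) : degreeOn F (single i 1) ≤ 1 := by
  classical
  by_cases hi : i ∈ F
  · exact (degreeOn_single_of_mem hi).le
  · simp [degreeOn_apply, single_apply, hi]

theorem degreeOn_tsub_add {a b : σ →₀ ℕ} (h : a ≤ b) :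
    degreeOn F (b - a) + degreeOn F a = degreeOn F b := by
  rw [← map_add, tsub_add_cancel_of_le h]

theorem card_le_degreeOn_sum {M : Multiset (σ →₀ ℕ)} (hM : ∀ x ∈ M, 1 ≤ degreeOn F x) :
    Multiset.card M ≤ degreeOn F M.sum := by
  rw [map_multiset_sum]
  simpa using Multiset.card_nsmul_le_sum (s := M.map (degreeOn F)) (a := 1) (by simpa using hM)

end Finsupp

open Finsupp

theorem Multiset.exists_eq_cons_cons_of_card_lt {α : Type*} {M : Multiset α} {s : Finset α}
    (hMs : ∀ x ∈ M, x ∈ s) (h : #s < Multiset.card M) : ∃ g M', M = g ::ₘ g ::ₘ M' := by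
  classical
  obtain ⟨g, hg⟩ : ∃ g, 1 < M.count g := by
    by_contra! hM
    rw [← toFinset_card_eq_card_iff_nodup.2 (nodup_iff_count_le_one.2 hM)] at h
    exact h.not_ge (Finset.card_le_card fun x hx => hMs x (mem_toFinset.1 hx))
  obtain ⟨M', hM'⟩ := le_iff_exists_add.1 (le_count_iff_replicate_le.1 hg)
  exact ⟨g, M', by simpa using hM'⟩

def DominatesSum (S : Set (σ →₀ ℕ)) (n : ℕ) (b : σ →₀ ℕ) : Prop :=
  ∃ M : Multiset (σ →₀ ℕ), Multiset.card M = n ∧ (∀ x ∈ M, x ∈ S) ∧ M.sum ≤ b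

theorem dominatesSum_singles_of_le_degreeOn (F : Finset σ) :
    ∀ (n : ℕ) (b : σ →₀ ℕ), n ≤ degreeOn F b → DominatesSum ((single · 1) '' F) n b
  | 0, _, _ => ⟨0, rfl, by simp, by simp⟩
  | n + 1, b, hb => by
    obtain ⟨i, hiF, hib⟩ : ∃ i ∈ F, b i ≠ 0 := by
      by_contra! h
      simp [degreeOn_apply, sum_eq_zero h] at hb
    have hib : single i 1 ≤ b := single_le_iff.2 (Nat.one_le_iff_ne_zero.2 hib)
    have hdeg := degreeOn_tsub_add (F := F) hib
    rw [degreeOn_single_of_mem hiF] at hdeg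
    obtain ⟨M, hcard, hMS, hMb⟩ :=
      dominatesSum_singles_of_le_degreeOn F n (b - single i 1) (by omega)
    refine ⟨single i 1 ::ₘ M, by simp [hcard], ?_, ?_⟩
    · simpa [Multiset.forall_mem_cons] using ⟨⟨i, hiF, rfl⟩, hMS⟩
    · calc (single i 1 ::ₘ M).sum ≤ single i 1 + (b - single i 1) := by simpa using hMb
        _ = b := add_tsub_cancel_of_le hib

theorem dominatesSum_singles_iff {F : Finset σ} {n : ℕ} {b : σ →₀ ℕ} :
    DominatesSum ((single · 1) '' F) n b ↔ n ≤ degreeOn F b := by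
  refine ⟨fun ⟨M, hcard, hMS, hMb⟩ => ?_, dominatesSum_singles_of_le_degreeOn F n b⟩
  have hM : ∀ x ∈ M, 1 ≤ degreeOn F x := fun x hx => by
    obtain ⟨i, hi, rfl⟩ := hMS x hx
    exact (degreeOn_single_of_mem hi).ge
  exact hcard ▸ (card_le_degreeOn_sum hM).trans (degreeOn_mono hMb)

section Combinatorics

variable {ι : Type*} {F : ι → Finset σ} {G : Finset (σ →₀ ℕ)} {n : ℕ}

theorem dominatesSum_succ_of_two_mul_card_lt (hcov : ∀ g ∈ G, ∀ j, 1 ≤ degreeOn (F j) g)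
    (hprev : ∀ b, (∀ j, n ≤ degreeOn (F j) b) → DominatesSum G n b) (hG : #G ≤ 2 * n)
    {c : σ →₀ ℕ} {M : Multiset (σ →₀ ℕ)} (hcard : Multiset.card M = 2 * n + 1)
    (hMG : ∀ x ∈ M, x ∈ G) (hMc : M.sum ≤ c + c) : DominatesSum G (n + 1) c := by
  obtain ⟨g, M, rfl⟩ := Multiset.exists_eq_cons_cons_of_card_lt hMG (by omega)
  simp only [Multiset.forall_mem_cons] at hMG
  obtain ⟨hg, -, hMG⟩ := hMG
  simp only [Multiset.card_cons, Multiset.sum_cons] at hcard hMc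
  have hgc : g ≤ c := fun u => by
    have := hMc u
    simp only [Finsupp.add_apply] at this
    omega
  -- the other `2n - 1` generators have degree `≥ 1` each, so `2 deg (c - g) ≥ 2n - 1`
  have hdeg : ∀ j, n ≤ degreeOn (F j) (c - g) := fun j => by
    have hM := card_le_degreeOn_sum fun x hx => hcov x (hMG x hx) j
    have hsum := degreeOn_mono (F := F j) hMc
    have hcg := degreeOn_tsub_add (F := F j) hgc
    simp only [map_add] at hsum
    omega
  obtain ⟨S, hScard, hSG, hSc⟩ := hprev (c - g) hdeg
  refine ⟨g ::ₘ S, by simp [hScard], by simpa [Multiset.forall_mem_cons] using ⟨hg, hSG⟩, ?_⟩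
  calc (g ::ₘ S).sum ≤ g + (c - g) := by simpa using hSc
    _ = c := add_tsub_cancel_of_le hgc

theorem dominatesSum_replicate {g : σ →₀ ℕ} (hg : g ∈ G) (hsf : ∀ i, g i ≤ 1) {m : ℕ}
    {c : σ →₀ ℕ} (hc : ∀ v ∈ g.support, m ≤ c v) : DominatesSum G m c := by
  refine ⟨Multiset.replicate m g, by simp, fun x hx => Multiset.eq_of_mem_replicate hx ▸ hg, ?_⟩
  intro v
  by_cases hv : g v = 0
  · simp [hv]
  · simpa [Nat.le_antisymm (hsf v) (Nat.one_le_iff_ne_zero.2 hv)] using hc v (by simpa using hv)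

theorem dominatesSum_succ_of_le (hcov : ∀ g ∈ G, ∀ j, 1 ≤ degreeOn (F j) g)
    (hprev : ∀ b, (∀ j, n ≤ degreeOn (F j) b) → DominatesSum G n b) (hG : #G ≤ 2 * n)
    {g : σ →₀ ℕ} (hg : g ∈ G) (hsf : ∀ i, g i ≤ 1) (c : σ →₀ ℕ)
    (hc : ∀ j, n + 1 ≤ degreeOn (F j) c) (hgc : g ≤ c) : DominatesSum G (n + 1) c := by
  induction hdef : ∑ v ∈ g.support, (n + 1 - c v) using Nat.strong_induction_on
    generalizing c with | _ N ih => ?_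
  by_cases hfull : ∀ v ∈ g.support, n + 1 ≤ c v
  · exact dominatesSum_replicate hg hsf hfull
  obtain ⟨v, hv, hcv⟩ : ∃ v ∈ g.support, c v < n + 1 := by simpa using hfull
  have hgv : g v ≠ 0 := mem_support_iff.1 hv
  have hev : single v 1 ≤ c := single_le_iff.2 ((Nat.one_le_iff_ne_zero.2 hgv).trans (hgc v))
  obtain ⟨S, hScard, hSG, hSc⟩ := hprev (c - single v 1) fun j => by
    have := degreeOn_tsub_add (F := F j) hev
    have := degreeOn_single_le (F := F j) v
    have := hc j
    omega
  have hSc' : S.sum ≤ c := hSc.trans tsub_le_self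
  set c' := c + (c - S.sum) with hc'
  have hcc' : c ≤ c' := le_self_add
  have hcv' : c v < c' v := by
    have hSv := hSc v
    have := hgc v
    simp only [tsub_apply, single_eq_same] at hSv
    simp only [hc', Finsupp.add_apply, tsub_apply]
    omega
  have hdef' : ∑ u ∈ g.support, (n + 1 - c' u) < N :=
    hdef ▸ sum_lt_sum (fun u _ => Nat.sub_le_sub_left (hcc' u) _) ⟨v, hv, by omega⟩
  obtain ⟨T, hTcard, hTG, hTc⟩ :=
    ih _ hdef' c' (fun j => (hc j).trans (degreeOn_mono hcc')) (hgc.trans hcc') rfl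
  refine dominatesSum_succ_of_two_mul_card_lt hcov hprev hG (M := T + S)
    (by simp [hTcard, hScard]; ring) (by simpa [or_imp, forall_and] using ⟨hTG, hSG⟩) ?_
  calc (T + S).sum ≤ c' + S.sum := by simpa using hTc
    _ = c + c := by rw [hc', add_assoc, tsub_add_cancel_of_le hSc']

theorem dominatesSum_succ (hsf : ∀ g ∈ G, ∀ i, g i ≤ 1)
    (hcov : ∀ g ∈ G, ∀ j, 1 ≤ degreeOn (F j) g) (hn : n ≠ 0) (hG : #G ≤ 2 * n)
    (hprev : ∀ b, (∀ j, n ≤ degreeOn (F j) b) → DominatesSum G n b)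
    (a : σ →₀ ℕ) (ha : ∀ j, n + 1 ≤ degreeOn (F j) a) : DominatesSum G (n + 1) a := by
  obtain ⟨S, hScard, hSG, hSa⟩ := hprev a fun j => (Nat.le_succ n).trans (ha j)
  obtain ⟨g, hgS⟩ := Multiset.card_pos_iff_exists_mem.1 (hScard ▸ Nat.pos_of_ne_zero hn)
  exact dominatesSum_succ_of_le hcov hprev hG (hSG g hgS) (hsf g (hSG g hgS)) a ha
    ((Multiset.le_sum_of_mem hgS).trans hSa)

end Combinatorics

namespace MvPolynomial

variable {R : Type*} [CommSemiring R]

theorem span_monomial_image_pow (S : Set (σ →₀ ℕ)) (n : ℕ) :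
    Ideal.span ((fun a => monomial a (1 : R)) '' S) ^ n =
      Ideal.span ((fun a => monomial a (1 : R)) ''
        {b | ∃ M : Multiset (σ →₀ ℕ), Multiset.card M = n ∧ (∀ x ∈ M, x ∈ S) ∧ M.sum = b}) := by
  induction n with
  | zero => simp [monomial_zero']
  | succ n ih =>
    rw [pow_succ, ih, Ideal.span_mul_span', ← Set.image2_mul, Set.image2_image_left,
      Set.image2_image_right]
    congr 1
    ext p
    simp only [monomial_mul, mul_one, Set.mem_image2, Set.mem_image, Set.mem_ofPred_eq]
    constructor
    · rintro ⟨_, ⟨M, hcard, hMS, rfl⟩, g, hg, rfl⟩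
      refine ⟨M.sum + g, ⟨g ::ₘ M, by simp [hcard], ?_, by simp [add_comm]⟩, rfl⟩
      simpa [Multiset.forall_mem_cons] using ⟨hg, hMS⟩
    · rintro ⟨_, ⟨M, hcard, hMS, rfl⟩, rfl⟩
      obtain ⟨g, M, rfl⟩ : ∃ g M', M = g ::ₘ M' :=
        (Multiset.card_pos_iff_exists_mem.1 (by omega)).imp fun _ => Multiset.exists_cons_of_mem
      simp only [Multiset.forall_mem_cons] at hMS
      exact ⟨M.sum, ⟨M, by simpa using hcard, hMS.2, rfl⟩, g, hMS.1, by simp [add_comm]⟩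

theorem mem_span_monomial_image_pow_iff {p : MvPolynomial σ R} {S : Set (σ →₀ ℕ)} {n : ℕ} :
    p ∈ Ideal.span ((fun a => monomial a (1 : R)) '' S) ^ n ↔
      ∀ b ∈ p.support, DominatesSum S n b := by
  simp [span_monomial_image_pow, mem_ideal_span_monomial_image, DominatesSum, and_assoc]

theorem mem_span_X_image_pow_iff {p : MvPolynomial σ R} {F : Finset σ} {n : ℕ} :
    p ∈ Ideal.span (X '' (F : Set σ)) ^ n ↔ ∀ b ∈ p.support, n ≤ degreeOn F b := by
  have hX : X '' (F : Set σ) = (fun a => monomial a (1 : R)) '' ((single · 1) '' F) := by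
    rw [Set.image_image]
    rfl
  simp only [hX, mem_span_monomial_image_pow_iff, dominatesSum_singles_iff]

section Nontrivial

variable [Nontrivial R]

theorem support_monomial_one (b : σ →₀ ℕ) : (monomial b (1 : R)).support = {b} := by
  classical
  rw [support_monomial, if_neg one_ne_zero]

theorem monomial_mem_span_monomial_image_pow_iff {S : Set (σ →₀ ℕ)} {n : ℕ} {b : σ →₀ ℕ} :
    monomial b (1 : R) ∈ Ideal.span ((fun a => monomial a (1 : R)) '' S) ^ n ↔
      DominatesSum S n b := by
  simp only [mem_span_monomial_image_pow_iff, support_monomial_one, Finset.mem_singleton,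
    forall_eq]

theorem monomial_mem_span_X_image_pow_iff {F : Finset σ} {n : ℕ} {b : σ →₀ ℕ} :
    monomial b (1 : R) ∈ Ideal.span (X '' (F : Set σ)) ^ n ↔ n ≤ degreeOn F b := by
  simp only [mem_span_X_image_pow_iff, support_monomial_one, Finset.mem_singleton, forall_eq]

theorem iInf_span_X_image_pow_le_iff {ι : Type*} (F : ι → Finset σ) (S : Set (σ →₀ ℕ))
    (n : ℕ) :
    ⨅ j, Ideal.span (X '' (F j : Set σ)) ^ n ≤
        Ideal.span ((fun a => monomial a (1 : R)) '' S) ^ n ↔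
      ∀ b, (∀ j, n ≤ degreeOn (F j) b) → DominatesSum S n b := by
  refine ⟨fun hle b hb => ?_, fun h p hp => ?_⟩
  · refine monomial_mem_span_monomial_image_pow_iff.1 (hle ?_)
    exact Submodule.mem_iInf _ |>.2 fun j => monomial_mem_span_X_image_pow_iff.2 (hb j)
  · rw [Submodule.mem_iInf] at hp
    exact mem_span_monomial_image_pow_iff.2 fun b hb =>
      h b fun j => mem_span_X_image_pow_iff.1 (hp j) b hb

end Nontrivial

end MvPolynomial

end

theorem ordinary_eq_symbolic_of_half_mu_general (k : Type*) [Field k] (d s : ℕ)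
    (F : Fin s → Finset (Fin d))
    (Q : Fin s → Ideal (MvPolynomial (Fin d) k))
    (hQ : ∀ j, Q j = Ideal.span (X '' (F j : Set (Fin d))))
    (I : Ideal (MvPolynomial (Fin d) k)) (hI : I = ⨅ j, Q j)
    (G : Finset (Fin d →₀ ℕ))
    (hG : I = Ideal.span ((fun a => monomial a (1 : k)) '' (G : Set (Fin d →₀ ℕ))))
    (hsf : ∀ a ∈ G, ∀ i, a i ≤ 1)
    (h : ∀ n : ℕ, 1 ≤ n → n ≤ ⌈(G.card : ℚ) / 2⌉₊ → I ^ n = ⨅ j, Q j ^ n) :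
    ∀ n : ℕ, 1 ≤ n → I ^ n = ⨅ j, Q j ^ n := by
  subst hG
  simp only [hQ] at hI h ⊢
  have hcov : ∀ g ∈ G, ∀ j, 1 ≤ Finsupp.degreeOn (F j) g := fun g hg j => by
    have hgQ := Submodule.mem_iInf _ |>.1 (hI.le (Ideal.subset_span ⟨g, hg, rfl⟩)) j
    exact monomial_mem_span_X_image_pow_iff.1 (by rwa [pow_one])
  have hsymb : ∀ n, 1 ≤ n → ∀ b, (∀ j, n ≤ Finsupp.degreeOn (F j) b) → DominatesSum G n b := by
    intro n
    induction n using Nat.strong_induction_on with | _ n ih => ?_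
    intro hn
    rcases le_or_gt n ⌈(G.card : ℚ) / 2⌉₊ with hle | hlt
    · exact (iInf_span_X_image_pow_le_iff F G n).1 (h n hn hle).ge
    obtain rfl | ⟨m, hm, rfl⟩ : n = 1 ∨ ∃ m, 1 ≤ m ∧ n = m + 1 :=
      (eq_or_lt_of_le hn).imp Eq.symm fun _ => ⟨n - 1, by omega, by omega⟩
    · exact (iInf_span_X_image_pow_le_iff F G 1).1 (by simpa only [pow_one] using hI.ge)
    have hG : #G ≤ 2 * m := by
      have : (G.card : ℚ) / 2 ≤ m := Nat.ceil_le.1 (by omega)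
      exact_mod_cast (by linarith : (G.card : ℚ) ≤ 2 * m)
    exact dominatesSum_succ hsf hcov (by omega) hG (ih m (by omega) hm)
  intro n hn
  exact le_antisymm (le_iInf fun j => Ideal.pow_right_mono (hI.trans_le (iInf_le _ j)) n)
    ((iInf_span_X_image_pow_le_iff F G n).2 (hsymb n hn))

/-- let `I` be a square-free monomial ideal of `R = k[x_1,…,x_d]` with
minimal primes `Q_1,…,Q_s`, symbolic powers `I^{(n)} = ⋂_j Q_j^n`, and minimal monomial
generating set `{x^a : a ∈ G}` (so `μ(I) = |G|`). If `I^n = I^{(n)}` for every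
`n ≤ ⌈μ(I)/2⌉`, then `I^n = I^{(n)}` for every positive integer `n`. -/
theorem ordinary_eq_symbolic_of_half_mu (k : Type*) [Field k] (d s : ℕ)
    (F : Fin s → Finset (Fin d))
    (Q : Fin s → Ideal (MvPolynomial (Fin d) k))
    (hQ : ∀ j, Q j = Ideal.span (X '' (F j : Set (Fin d))))
    (I : Ideal (MvPolynomial (Fin d) k)) (hI : I = ⨅ j, Q j)
    (hmin : I.minimalPrimes = Set.range Q)
    (G : Finset (Fin d →₀ ℕ))
    (hG : I = Ideal.span ((fun a => monomial a (1 : k)) '' (G : Set (Fin d →₀ ℕ))))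
    (hsf : ∀ a ∈ G, ∀ i, a i ≤ 1)
    (hGmin : ∀ a ∈ G, ∀ b ∈ G, a ≤ b → a = b)
    (h : ∀ n : ℕ, 1 ≤ n → n ≤ ⌈(G.card : ℚ) / 2⌉₊ → I ^ n = ⨅ j, Q j ^ n) :
    ∀ n : ℕ, 1 ≤ n → I ^ n = ⨅ j, Q j ^ n :=
  ordinary_eq_symbolic_of_half_mu_general k d s F Q hQ I hI G hG hsf h
end

section
/- Let I be a square-free monomial ideal with minimal primes Q_1,...,Q_s and I^{(n)} = Q_1^n ∩ ... ∩ Q_s^n. If I^n = I^{(n)} for all n ≥ 1, then for every fixed m ≥ 2 the ideal J = ⊕_{n≥0} I^{n+1} t^n of the Rees algebra R[It] is radical; equivalently, if f is a monomial with f ∈ I^n and f^{m^e} ∈ I^{n m^e + 1} for some e ≥ 0, then f ∈ I^{n+1}. -/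
open MvPolynomial

private lemma aeval_monomial_if {k : Type*} [Field k] {d : ℕ} (S : Finset (Fin d))
    (a : Fin d →₀ ℕ) :
    aeval (fun i => if i ∈ S then (Polynomial.X : Polynomial k) else 1)
        (monomial a (1 : k))
      = Polynomial.X ^ (∑ i ∈ S, a i) := by
  rw [aeval_monomial, map_one, one_mul, Finsupp.prod]
  have h1 : ∀ i ∈ a.support,
      (if i ∈ S then (Polynomial.X : Polynomial k) else 1) ^ a i
        = Polynomial.X ^ (if i ∈ S then a i else 0) := by
    intro i _
    split <;> simp
  rw [Finset.prod_congr rfl h1, Finset.prod_pow_eq_pow_sum]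
  congr 1
  rw [Finset.sum_ite_mem]
  apply Finset.sum_subset
  · exact Finset.inter_subset_right
  · intro i _ hi
    simp only [Finset.mem_inter, not_and] at hi
    by_cases h : i ∈ a.support
    · exact absurd h (by intro hh; exact (Finsupp.mem_support_iff.1 hh) (by
        by_contra _
        exact absurd (hi hh) (by simp_all)))
    · exact Finsupp.notMem_support_iff.1 h

private lemma sum_ge_of_mem_pow {k : Type*} [Field k] {d : ℕ} (S : Finset (Fin d))
    (a : Fin d →₀ ℕ) (n : ℕ)
    (h : monomial a (1 : k) ∈ (Ideal.span (X '' (S : Set (Fin d)))) ^ n) :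
    n ≤ ∑ i ∈ S, a i := by
  set f : Fin d → Polynomial k := fun i => if i ∈ S then Polynomial.X else 1 with hf
  have hmap : (Ideal.span (X '' (S : Set (Fin d)) : Set (MvPolynomial (Fin d) k))).map
        (aeval f).toRingHom
      ≤ Ideal.span {(Polynomial.X : Polynomial k)} := by
    rw [Ideal.map_span ((aeval f).toRingHom : MvPolynomial (Fin d) k →+* Polynomial k)]
    apply Ideal.span_le.2
    rintro _ ⟨_, ⟨i, hi, rfl⟩, rfl⟩
    simp only [AlgHom.toRingHom_eq_coe, RingHom.coe_coe, aeval_X, hf]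
    rw [if_pos (Finset.mem_coe.1 hi)]
    exact Ideal.subset_span rfl
  have h2 : aeval f (monomial a (1 : k))
      ∈ (Ideal.span {(Polynomial.X : Polynomial k)}) ^ n := by
    have := Ideal.mem_map_of_mem (aeval f).toRingHom h
    rw [Ideal.map_pow] at this
    exact Ideal.pow_right_mono hmap n this
  rw [aeval_monomial_if, Ideal.span_singleton_pow, Ideal.mem_span_singleton] at h2
  have hX : (Polynomial.X : Polynomial k) ^ (∑ i ∈ S, a i) ≠ 0 :=
    pow_ne_zero _ Polynomial.X_ne_zero
  have := Polynomial.natDegree_le_of_dvd h2 hX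
  simpa using this

private lemma mem_pow_of_le_sum {k : Type*} [Field k] {d : ℕ} (S : Finset (Fin d)) :
    ∀ (n : ℕ) (a : Fin d →₀ ℕ), n ≤ ∑ i ∈ S, a i →
      monomial a (1 : k) ∈ (Ideal.span (X '' (S : Set (Fin d)))) ^ n := by
  intro n
  induction n with
  | zero => intro a _; simp
  | succ n ih =>
    intro a h
    have hex : ∃ i ∈ S, 0 < a i := by
      by_contra hc
      push_neg at hc
      have : ∑ i ∈ S, a i = 0 :=
        Finset.sum_eq_zero (fun i hi => Nat.le_zero.1 (hc i hi))
      omega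
    obtain ⟨i, hiS, hai⟩ := hex
    set b : Fin d →₀ ℕ := a - Finsupp.single i 1 with hb
    have hab : Finsupp.single i 1 + b = a := by
      ext j
      simp only [hb, Finsupp.add_apply, Finsupp.tsub_apply, Finsupp.single_apply]
      by_cases hji : i = j
      · rw [if_pos hji]
        subst hji
        omega
      · rw [if_neg hji]
        omega
    have key : monomial a (1 : k) = X i * monomial b 1 := by
      rw [X, monomial_mul, one_mul, hab]
    have hsum : ∑ j ∈ S, a j = 1 + ∑ j ∈ S, b j := by
      rw [← hab]
      have hsplit : ∀ j ∈ S, ((Finsupp.single i 1 + b : Fin d →₀ ℕ)) j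
          = (Finsupp.single i (1:ℕ)) j + b j := fun j _ => rfl
      rw [Finset.sum_congr rfl hsplit, Finset.sum_add_distrib]
      congr 1
      simp [Finsupp.single_apply, Finset.sum_ite_eq, hiS]
    rw [key, pow_succ']
    exact Ideal.mul_mem_mul (Ideal.subset_span ⟨i, hiS, rfl⟩)
      (ih _ (by omega))

/-- let `I` be a square-free monomial ideal with minimal primes
`Q_1,…,Q_s` and `I^{(n)} = ⋂_j Q_j^n`. If `I^n = I^{(n)}` for all `n ≥ 1`, then for
every `m ≥ 2` the ideal `J = ⊕_n I^{n+1} t^n` of the Rees algebra is radical;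
equivalently: if `f` is a monomial with `f ∈ I^n` and `f^{m^e} ∈ I^{n m^e + 1}` for
some `e ≥ 0`, then `f ∈ I^{n+1}`. -/
theorem rees_ideal_radical_of_ordinary_eq_symbolic (k : Type*) [Field k] (d s : ℕ)
    (F : Fin s → Finset (Fin d))
    (Q : Fin s → Ideal (MvPolynomial (Fin d) k))
    (hQ : ∀ j, Q j = Ideal.span (X '' (F j : Set (Fin d))))
    (I : Ideal (MvPolynomial (Fin d) k)) (hI : I = ⨅ j, Q j)
    (hmin : I.minimalPrimes = Set.range Q)
    (hsym : ∀ n : ℕ, 1 ≤ n → I ^ n = ⨅ j, Q j ^ n) :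
    ∀ m : ℕ, 2 ≤ m → ∀ n e : ℕ, ∀ a : Fin d →₀ ℕ,
      monomial a (1 : k) ∈ I ^ n →
      (monomial a (1 : k)) ^ (m ^ e) ∈ I ^ (n * m ^ e + 1) →
      monomial a (1 : k) ∈ I ^ (n + 1) := by
  intro m hm n e a _ hpow
  have hM : 0 < m ^ e := pow_pos (by omega) e
  rw [monomial_pow, one_pow] at hpow
  rw [hsym _ (by omega), Ideal.mem_iInf] at hpow
  have hkey : ∀ j, n + 1 ≤ ∑ i ∈ F j, a i := by
    intro j
    have h1 := hpow j
    rw [hQ j] at h1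
    have h2 := sum_ge_of_mem_pow _ _ _ h1
    have h3 : ∑ i ∈ F j, (m ^ e • a) i = m ^ e * ∑ i ∈ F j, a i := by
      simp [Finsupp.smul_apply, Finset.mul_sum]
    rw [h3] at h2
    by_contra hc
    push_neg at hc
    have h4 : ∑ i ∈ F j, a i ≤ n := by omega
    have h5 := Nat.mul_le_mul_left (m ^ e) h4
    rw [mul_comm (m ^ e) n] at h5
    exact Nat.lt_irrefl _ (lt_of_lt_of_le (Nat.lt_succ_of_le (le_trans h2 h5))
      (le_refl _)) |>.elim
  rw [hsym (n + 1) (by omega), Ideal.mem_iInf]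
  intro j
  rw [hQ j]
  exact mem_pow_of_le_sum _ _ _ (hkey j)
end

section
/- Let I = (x_1x_2, x_2x_3, ..., x_{2t-2}x_{2t-1}, x_{2t-1}x_1) be the edge ideal of the odd cycle on 2t-1 vertices in R = k[x_1,...,x_{2t-1}], where t ≥ 2. Then the monomial x_1 x_2 ⋯ x_{2t-1} belongs to the symbolic power I^{(t)} but not to the ordinary power I^t; in particular I^{(t)} ≠ I^t. -/
/-!
A minimal prime `P` of `I` contains a variable from every edge, so the variables it contains form
a vertex cover of the cycle; an odd cycle on `2t - 1` vertices needs at least `t` of them, whence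
`x_1 ⋯ x_{2t-1} ∈ P^t`. On the other hand, sending every variable to one variable `X` maps `I`
into `(X^2)`, hence `I^t` into `(X^{2t})`, while the monomial goes to `X^{2t-1}`.
-/

open MvPolynomial Finset

theorem Fintype.card_le_two_mul_card_of_forall_mem_or_apply_mem {α : Type*} [Fintype α]
    [DecidableEq α] (σ : Equiv.Perm α) {S : Finset α} (hS : ∀ i, i ∈ S ∨ σ i ∈ S) :
    Fintype.card α ≤ 2 * #S := by
  have hcover : univ ⊆ S ∪ S.map σ.symm.toEmbedding := fun i _ => by
    rcases hS i with h | h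
    · exact mem_union_left _ h
    · exact mem_union_right _ (mem_map_equiv.2 (by simpa using h))
  calc Fintype.card α = #(univ : Finset α) := (card_univ).symm
    _ ≤ #S + #(S.map σ.symm.toEmbedding) := (card_le_card hcover).trans (card_union_le _ _)
    _ = 2 * #S := by rw [card_map]; ring

theorem Ideal.prod_mem_pow_card {R ι : Type*} [CommRing R] {I : Ideal R} {s : Finset ι}
    {x : ι → R} (hx : ∀ i ∈ s, x i ∈ I) : ∏ i ∈ s, x i ∈ I ^ #s := by
  simpa only [prod_const] using Ideal.prod_mem_prod hx

theorem Ideal.prod_mem_pow_of_forall_mul_apply_mem {R α : Type*} [CommRing R] [Fintype α]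
    {P : Ideal R} [P.IsPrime] (σ : Equiv.Perm α) {x : α → R} (hx : ∀ i, x i * x (σ i) ∈ P)
    {n : ℕ} (hn : 2 * n ≤ Fintype.card α + 1) : ∏ i, x i ∈ P ^ n := by
  classical
  set S := univ.filter fun i => x i ∈ P
  have hS : ∀ i, i ∈ S ∨ σ i ∈ S := fun i => by
    simpa [S] using Ideal.IsPrime.mem_or_mem ‹_› (hx i)
  have hnS : n ≤ #S := by
    have := Fintype.card_le_two_mul_card_of_forall_mem_or_apply_mem σ hS
    omega
  rw [← prod_mul_prod_compl S]
  refine Ideal.mul_mem_right _ _ (Ideal.pow_le_pow_right hnS (Ideal.prod_mem_pow_card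
    fun i hi => (mem_filter.1 hi).2))

theorem MvPolynomial.prod_X_notMem_pow {R σ : Type*} [CommRing R] [Nontrivial R]
    {I : Ideal (MvPolynomial σ R)}
    (hI : I ≤ Ideal.span (Set.range fun p : σ × σ => X p.1 * X p.2))
    (s : Finset σ) {n : ℕ} (hn : #s < 2 * n) : ∏ i ∈ s, X i ∉ I ^ n := by
  let φ : MvPolynomial σ R →+* Polynomial R := (aeval fun _ => Polynomial.X).toRingHom
  have hφI : I.map φ ≤ Ideal.span {Polynomial.X ^ 2} := by
    refine (Ideal.map_mono hI).trans ?_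
    rw [Ideal.map_span, Ideal.span_le]
    rintro _ ⟨_, ⟨p, rfl⟩, rfl⟩
    exact Ideal.mem_span_singleton.2 (by simp [φ, sq])
  intro hmem
  have h : φ (∏ i ∈ s, X i) ∈ Ideal.span {Polynomial.X ^ (2 * n)} := by
    rw [pow_mul, ← Ideal.span_singleton_pow]
    exact Ideal.pow_right_mono hφI n (Ideal.map_pow φ I n ▸ Ideal.mem_map_of_mem φ hmem)
  have hφ : φ (∏ i ∈ s, X i) = Polynomial.X ^ #s := by simp [φ]
  rw [hφ, Ideal.mem_span_singleton, Polynomial.X_pow_dvd_iff] at h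
  simpa using h _ hn

theorem Fin.mk_add_one_mod_eq_finRotate {d : ℕ} (i : Fin d) (h : ((i : ℕ) + 1) % d < d) :
    (⟨((i : ℕ) + 1) % d, h⟩ : Fin d) = finRotate d i := by
  cases d with
  | zero => exact i.elim0
  | succ n => ext; simp [Fin.val_add]

/-- let `I` be the edge ideal of the odd cycle on `d = 2t - 1` vertices
(`t ≥ 2`) in `R = k[x_1,…,x_{2t-1}]`, i.e. `I = (x_1x_2, x_2x_3, …, x_{2t-1}x_1)`.
Then the monomial `x_1 x_2 ⋯ x_{2t-1}` belongs to the symbolic power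
`I^{(t)} = ⋂_{P ∈ Min(I)} P^t` but not to the ordinary power `I^t`; in particular
`I^{(t)} ≠ I^t`. -/
theorem odd_cycle_symbolic_ne_ordinary (k : Type*) [Field k] (t d : ℕ)
    (ht : 2 ≤ t) (hd : d = 2 * t - 1)
    (I : Ideal (MvPolynomial (Fin d) k))
    (hI : I = Ideal.span {f : MvPolynomial (Fin d) k |
      ∃ i : Fin d, f = X i * X ⟨((i : ℕ) + 1) % d, Nat.mod_lt _ (by omega)⟩}) :
    ((∏ i : Fin d, X i : MvPolynomial (Fin d) k) ∈
        ⨅ P : I.minimalPrimes, (P : Ideal (MvPolynomial (Fin d) k)) ^ t) ∧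
      (∏ i : Fin d, X i : MvPolynomial (Fin d) k) ∉ I ^ t ∧
      (⨅ P : I.minimalPrimes, (P : Ideal (MvPolynomial (Fin d) k)) ^ t) ≠ I ^ t := by
  simp only [Fin.mk_add_one_mod_eq_finRotate] at hI
  have hedge : ∀ i, X i * X (finRotate d i) ∈ I := fun i => hI ▸ Ideal.subset_span ⟨i, rfl⟩
  have hsymb : (∏ i : Fin d, X i : MvPolynomial (Fin d) k) ∈
      ⨅ P : I.minimalPrimes, (P : Ideal (MvPolynomial (Fin d) k)) ^ t := by
    refine Ideal.mem_iInf.2 fun ⟨P, ⟨_, hIP⟩, _⟩ => ?_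
    exact Ideal.prod_mem_pow_of_forall_mul_apply_mem (finRotate d) (fun i => hIP (hedge i))
      (by rw [Fintype.card_fin]; omega)
  have hord : (∏ i : Fin d, X i : MvPolynomial (Fin d) k) ∉ I ^ t := by
    refine MvPolynomial.prod_X_notMem_pow ?_ univ (by rw [card_univ, Fintype.card_fin]; omega)
    rw [hI]
    exact Ideal.span_mono fun _ ⟨i, hi⟩ => ⟨(i, finRotate d i), hi.symm⟩
  exact ⟨hsymb, hord, fun h => hord (h ▸ hsymb)⟩
end

section
/- Let C be a clutter on n vertices with incidence matrix M ∈ {0,1}^{n×m} whose columns are the incidence vectors b_1,...,b_m of the edges, and let I ⊆ k[v_1,...,v_n] be the ideal generated by the monomials v^{b_1},...,v^{b_m}. For c ∈ Z_{≥0}^n define γ(c) = min{ c·x : x ∈ Z_{≥0}^n, Mᵀx ≥ 1_m }. Then for a positive integer t, the monomial v^c lies in the symbolic power I^{(t)} if and only if t ≤ γ(c). -/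
open MvPolynomial

namespace SymbolicCoverAux

variable {k : Type*} [Field k] {n : ℕ}

/-- The ideal of polynomials all of whose monomials have `S`-degree at least `t`. -/
def Qdeg (S : Finset (Fin n)) (t : ℕ) : Ideal (MvPolynomial (Fin n) k) where
  carrier := {p | ∀ d ∈ p.support, t ≤ ∑ i ∈ S, d i}
  add_mem' := by
    intro a b ha hb d hd
    rcases Finset.mem_union.1 (MvPolynomial.support_add hd) with h | h
    exacts [ha d h, hb d h]
  zero_mem' := by simp
  smul_mem' := by
    intro r p hp d hd
    rw [smul_eq_mul] at hd
    obtain ⟨d1, hd1, d2, hd2, h⟩ := Finset.mem_add.1 (MvPolynomial.support_mul r p hd)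
    subst h
    calc t ≤ ∑ i ∈ S, d2 i := hp d2 hd2
    _ ≤ ∑ i ∈ S, (d1 + d2) i := Finset.sum_le_sum (fun i _ => by simp)

lemma mul_mem_Qdeg {S : Finset (Fin n)} {a b : ℕ} {p q : MvPolynomial (Fin n) k}
    (hp : p ∈ (Qdeg S a : Ideal (MvPolynomial (Fin n) k)))
    (hq : q ∈ (Qdeg S b : Ideal (MvPolynomial (Fin n) k))) :
    p * q ∈ (Qdeg S (a + b) : Ideal (MvPolynomial (Fin n) k)) := by
  intro d hd
  obtain ⟨d1, hd1, d2, hd2, h⟩ := Finset.mem_add.1 (MvPolynomial.support_mul p q hd)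
  subst h
  have h1 := hp d1 hd1
  have h2 := hq d2 hd2
  have : ∑ i ∈ S, (d1 + d2) i = ∑ i ∈ S, d1 i + ∑ i ∈ S, d2 i := by
    rw [← Finset.sum_add_distrib]; rfl
  omega

lemma span_pow_le_Qdeg (S : Finset (Fin n)) (t : ℕ) :
    (Ideal.span (X '' ↑S : Set (MvPolynomial (Fin n) k))) ^ t ≤ Qdeg S t := by
  induction t with
  | zero => intro p _ d _; exact Nat.zero_le _
  | succ t ih =>
    rw [pow_succ]
    refine Ideal.mul_le.2 fun r hr s hs => ?_
    have hs' : s ∈ (Qdeg S 1 : Ideal (MvPolynomial (Fin n) k)) := by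
      refine Ideal.span_le.2 ?_ hs
      rintro _ ⟨i, hi, rfl⟩
      intro d hd
      classical
      rw [MvPolynomial.support_X] at hd
      simp only [Finset.mem_singleton] at hd
      subst hd
      calc (1 : ℕ) = Finsupp.single i 1 i := by simp
      _ ≤ ∑ i' ∈ S, Finsupp.single i 1 i' :=
        Finset.single_le_sum (fun _ _ => Nat.zero_le _) (Finset.mem_coe.1 hi)
    exact mul_mem_Qdeg (ih hr) hs'

/-- Membership of a monomial in a power of an ideal generated by variables. -/
lemma monomial_mem_span_pow_iff (S : Finset (Fin n)) (c : Fin n →₀ ℕ) (t : ℕ) :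
    (monomial c (1 : k)) ∈ (Ideal.span (X '' ↑S : Set (MvPolynomial (Fin n) k))) ^ t ↔
      t ≤ ∑ i ∈ S, c i := by
  constructor
  · intro h
    classical
    have := span_pow_le_Qdeg (k := k) S t h c ?_
    · exact this
    · rw [MvPolynomial.support_monomial]
      simp
  · induction t generalizing c with
    | zero => intro _; simp [Ideal.one_eq_top]
    | succ t ih =>
      intro h
      classical
      have hex : ∃ i ∈ S, c i ≠ 0 := by
        by_contra hc
        push_neg at hc
        have : ∑ i ∈ S, c i = 0 := Finset.sum_eq_zero fun i hi => hc i hi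
        omega
      obtain ⟨i, hiS, hci⟩ := hex
      set c' : Fin n →₀ ℕ := c - Finsupp.single i 1 with hc'
      have hsplit : Finsupp.single i 1 + c' = c := by
        ext j
        simp only [Finsupp.add_apply, hc', Finsupp.tsub_apply, Finsupp.single_apply]
        by_cases hji : i = j
        · subst hji; simp; omega
        · simp [hji]
      have hmono : (monomial c (1 : k)) = X i * monomial c' 1 := by
        rw [X, monomial_mul, one_mul, hsplit]
      have hsum : t ≤ ∑ i' ∈ S, c' i' := by
        have h1 : ∑ i' ∈ S, c i' = c i + ∑ i' ∈ S.erase i, c i' :=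
          (Finset.add_sum_erase S _ hiS).symm
        have h2 : ∑ i' ∈ S, c' i' = c' i + ∑ i' ∈ S.erase i, c' i' :=
          (Finset.add_sum_erase S _ hiS).symm
        have h3 : ∑ i' ∈ S.erase i, c' i' = ∑ i' ∈ S.erase i, c i' := by
          refine Finset.sum_congr rfl fun j hj => ?_
          have hji : j ≠ i := Finset.ne_of_mem_erase hj
          simp [hc', Finsupp.single_apply, (Ne.symm hji)]
        have h4 : c' i = c i - 1 := by simp [hc']
        omega
      rw [hmono, pow_succ']
      exact Ideal.mul_mem_mul (Ideal.subset_span ⟨i, hiS, rfl⟩) (ih c' hsum)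

lemma coeff_aeval_restrict (S : Set (Fin n)) [DecidablePred (· ∈ S)]
    (p : MvPolynomial (Fin n) k) (a : Fin n →₀ ℕ) (ha : ∀ i ∈ S, a i = 0) :
    coeff a (aeval (fun i => if i ∈ S then (0 : MvPolynomial (Fin n) k) else X i) p)
      = coeff a p := by
  classical
  set f : Fin n → MvPolynomial (Fin n) k := fun i => if i ∈ S then 0 else X i with hf
  conv_lhs => rw [p.as_sum]
  conv_rhs => rw [p.as_sum]
  rw [map_sum, coeff_sum, coeff_sum]
  refine Finset.sum_congr rfl fun d _ => ?_
  by_cases hd : ∃ i ∈ d.support, i ∈ S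
  · obtain ⟨i, hid, hiS⟩ := hd
    have hzero : aeval f (monomial d (coeff d p)) = 0 := by
      rw [aeval_monomial]
      have : (d.prod fun i e => f i ^ e) = 0 := by
        rw [Finsupp.prod]
        refine Finset.prod_eq_zero hid ?_
        rw [hf]
        simp only [if_pos hiS]
        exact zero_pow (Finsupp.mem_support_iff.1 hid)
      rw [this, mul_zero]
    rw [hzero]
    have hda : d ≠ a := fun h => (Finsupp.mem_support_iff.1 hid) (h ▸ ha i hiS)
    rw [coeff_monomial, if_neg hda, coeff_zero]
  · push_neg at hd
    have : aeval f (monomial d (coeff d p)) = monomial d (coeff d p) := by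
      rw [aeval_monomial, monomial_eq]
      congr 1
      refine Finsupp.prod_congr fun i hi => ?_
      rw [hf]; simp [if_neg (hd i hi)]
    rw [this]

lemma isPrime_span_X (S : Set (Fin n)) :
    (Ideal.span (X '' S : Set (MvPolynomial (Fin n) k))).IsPrime := by
  classical
  set f : Fin n → MvPolynomial (Fin n) k := fun i => if i ∈ S then 0 else X i with hf
  have hker : ∀ x ∈ Ideal.span (X '' S : Set (MvPolynomial (Fin n) k)), aeval f x = 0 := by
    intro x hx
    have : Ideal.span (X '' S : Set (MvPolynomial (Fin n) k)) ≤ RingHom.ker (aeval f) := by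
      rw [Ideal.span_le]
      rintro _ ⟨i, hi, rfl⟩
      simp [RingHom.mem_ker, hf, hi]
    exact this hx
  have hne : ∀ p : MvPolynomial (Fin n) k, p ∉ Ideal.span (X '' S) → aeval f p ≠ 0 := by
    intro p hp h0
    rw [mem_ideal_span_X_image] at hp
    push_neg at hp
    obtain ⟨a, ha, haS⟩ := hp
    have := coeff_aeval_restrict S p a haS
    rw [h0, coeff_zero] at this
    exact (MvPolynomial.mem_support_iff.1 ha) this.symm
  constructor
  · intro htop
    have h1 : (1 : MvPolynomial (Fin n) k) ∈ Ideal.span (X '' S) := htop ▸ Submodule.mem_top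
    have := hker 1 h1
    rw [map_one] at this
    exact one_ne_zero this
  · intro p q hpq
    by_contra hc
    push_neg at hc
    have := hker _ hpq
    rw [map_mul] at this
    exact mul_ne_zero (hne p hc.1) (hne q hc.2) this

end SymbolicCoverAux

/-- let `C` be a clutter on `n` vertices with 0-1 incidence matrix
`M ∈ {0,1}^{n×m}` (columns = incidence vectors of the `m` edges, each edge nonempty,
edges pairwise incomparable), and let `I ⊆ k[v_1,…,v_n]` be its edge ideal. For
`c ∈ ℤ_{≥0}^n` let `γ(c) = min{c·x : x ∈ ℤ_{≥0}^n, Mᵀx ≥ 1_m}`. Then for `t ≥ 1`, the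
monomial `v^c` lies in the symbolic power `I^{(t)} = ⋂_{P ∈ Min(I)} P^t` if and only
if `t ≤ γ(c)`. -/
theorem monomial_mem_symbolic_iff_cover_lp (k : Type*) [Field k] (n m : ℕ)
    (M : Matrix (Fin n) (Fin m) ℕ)
    (hM : ∀ i j, M i j ≤ 1)
    (hedge : ∀ j, ∃ i, M i j = 1)
    (hclutter : ∀ j j' : Fin m, (∀ i, M i j ≤ M i j') → j = j')
    (I : Ideal (MvPolynomial (Fin n) k))
    (hI : I = Ideal.span (Set.range fun j : Fin m =>
      monomial (Finsupp.equivFunOnFinite.symm fun i => M i j) (1 : k)))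
    (c : Fin n → ℕ) (t : ℕ) (ht : 1 ≤ t) :
    monomial (Finsupp.equivFunOnFinite.symm c) (1 : k) ∈
        (⨅ P : I.minimalPrimes, (P : Ideal (MvPolynomial (Fin n) k)) ^ t) ↔
      t ≤ sInf {v : ℕ | ∃ x : Fin n → ℕ,
        (∀ j, 1 ≤ ∑ i, M i j * x i) ∧ v = ∑ i, c i * x i} := by
  classical
  set b : Fin m → (Fin n →₀ ℕ) := fun j => Finsupp.equivFunOnFinite.symm fun i => M i j
    with hb
  have hbapp : ∀ j i, b j i = M i j := fun j i => rfl
  -- any vertex cover (as a Finset) gives an ideal of variables containing I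
  have hcover_le : ∀ S : Finset (Fin n), (∀ j, ∃ i ∈ S, M i j = 1) →
      I ≤ Ideal.span (X '' ↑S : Set (MvPolynomial (Fin n) k)) := by
    intro S hS
    rw [hI, Ideal.span_le]
    rintro _ ⟨j, rfl⟩
    rw [SetLike.mem_coe, mem_ideal_span_X_image]
    intro d hd
    rw [MvPolynomial.support_monomial, if_neg (one_ne_zero)] at hd
    rw [Finset.mem_singleton] at hd
    subst hd
    obtain ⟨i, hiS, hij⟩ := hS j
    exact ⟨i, Finset.mem_coe.2 hiS, by rw [hbapp, hij]; exact one_ne_zero⟩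
  -- any prime containing I yields a vertex cover of variables in it
  have hQcover : ∀ Q : Ideal (MvPolynomial (Fin n) k), Q.IsPrime → I ≤ Q →
      ∀ j, ∃ i, M i j = 1 ∧ X i ∈ Q := by
    intro Q hQp hIQ j
    have hmem : monomial (b j) (1 : k) ∈ Q := by
      refine hIQ ?_
      rw [hI]
      exact Ideal.subset_span ⟨j, rfl⟩
    rw [monomial_eq, map_one, one_mul, Finsupp.prod] at hmem
    haveI := hQp
    rw [Ideal.IsPrime.prod_mem_iff] at hmem
    obtain ⟨i, hi, hXi⟩ := hmem
    have hne : b j i ≠ 0 := Finsupp.mem_support_iff.1 hi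
    have hM1 : M i j = 1 := by have := hM i j; rw [hbapp] at hne; omega
    refine ⟨i, hM1, ?_⟩
    rw [hQp.pow_mem_iff_mem _ (Nat.pos_of_ne_zero hne)] at hXi
    exact hXi
  constructor
  · intro h
    refine le_csInf ⟨∑ i, c i * 1, fun _ => 1, fun j => ?_, rfl⟩ ?_
    · obtain ⟨i0, hi0⟩ := hedge j
      calc (1 : ℕ) = M i0 j * 1 := by rw [hi0]
      _ ≤ ∑ i, M i j * 1 :=
        Finset.single_le_sum (f := fun i => M i j * 1)
          (fun _ _ => Nat.zero_le _) (Finset.mem_univ i0)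
    rintro v ⟨x, hx, rfl⟩
    set S : Finset (Fin n) := Finset.univ.filter (fun i => x i ≠ 0) with hS
    have hScov : ∀ j, ∃ i ∈ S, M i j = 1 := by
      intro j
      by_contra hcon
      push_neg at hcon
      have hzero : ∑ i, M i j * x i = 0 := by
        refine Finset.sum_eq_zero fun i _ => ?_
        by_cases hxi : x i = 0
        · rw [hxi, mul_zero]
        · have hiS : i ∈ S := by rw [hS]; simp [hxi]
          have h1 := hM i j
          have h2 := hcon i hiS
          have : M i j = 0 := by omega
          rw [this, zero_mul]
      have := hx j
      omega
    haveI hp : (Ideal.span (X '' ↑S : Set (MvPolynomial (Fin n) k))).IsPrime :=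
      SymbolicCoverAux.isPrime_span_X _
    obtain ⟨Q, hQmin, hQle⟩ := Ideal.exists_minimalPrimes_le (hcover_le S hScov)
    have hmem : monomial (Finsupp.equivFunOnFinite.symm c) (1 : k) ∈ Q ^ t :=
      (Submodule.mem_iInf _).1 h ⟨Q, hQmin⟩
    have hmem2 : monomial (Finsupp.equivFunOnFinite.symm c) (1 : k) ∈
        (Ideal.span (X '' ↑S : Set (MvPolynomial (Fin n) k))) ^ t :=
      Ideal.pow_right_mono hQle t hmem
    rw [SymbolicCoverAux.monomial_mem_span_pow_iff] at hmem2
    have hc1 : ∑ i ∈ S, (Finsupp.equivFunOnFinite.symm c) i = ∑ i ∈ S, c i :=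
      Finset.sum_congr rfl fun i _ => rfl
    rw [hc1] at hmem2
    calc t ≤ ∑ i ∈ S, c i := hmem2
    _ ≤ ∑ i ∈ S, c i * x i := by
      refine Finset.sum_le_sum fun i hi => ?_
      have hxi : x i ≠ 0 := by
        rw [hS] at hi
        exact (Finset.mem_filter.1 hi).2
      have : 1 ≤ x i := Nat.one_le_iff_ne_zero.2 hxi
      exact Nat.le_mul_of_pos_right _ this
    _ ≤ ∑ i, c i * x i :=
      Finset.sum_le_sum_of_subset (Finset.subset_univ S)
  · intro h
    rw [Submodule.mem_iInf]
    rintro ⟨Q, hQmin⟩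
    have hQp : Q.IsPrime := hQmin.1.1
    have hQI : I ≤ Q := hQmin.1.2
    set T : Finset (Fin n) := Finset.univ.filter (fun i => X i ∈ Q) with hT
    have hspanle : Ideal.span (X '' ↑T : Set (MvPolynomial (Fin n) k)) ≤ Q := by
      rw [Ideal.span_le]
      rintro _ ⟨i, hi, rfl⟩
      have := Finset.mem_coe.1 hi
      rw [hT, Finset.mem_filter] at this
      exact this.2
    have hfeas : (∑ i ∈ T, c i) ∈ {v : ℕ | ∃ x : Fin n → ℕ,
        (∀ j, 1 ≤ ∑ i, M i j * x i) ∧ v = ∑ i, c i * x i} := by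
      refine ⟨fun i => if i ∈ T then 1 else 0, fun j => ?_, ?_⟩
      · obtain ⟨i, hM1, hXi⟩ := hQcover Q hQp hQI j
        have hiT : i ∈ T := by rw [hT]; simp [hXi]
        calc (1 : ℕ) = M i j * (if i ∈ T then 1 else 0) := by rw [hM1, if_pos hiT]
        _ ≤ ∑ i', M i' j * (if i' ∈ T then 1 else 0) :=
          Finset.single_le_sum (f := fun i' => M i' j * (if i' ∈ T then 1 else 0))
            (fun _ _ => Nat.zero_le _) (Finset.mem_univ i)
      · symm
        simp only [mul_ite, mul_one, mul_zero]
        rw [Finset.sum_ite_mem, Finset.univ_inter]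
    have ht' : t ≤ ∑ i ∈ T, c i := le_trans h (Nat.sInf_le hfeas)
    refine SetLike.le_def.1 (Ideal.pow_right_mono hspanle t) ?_
    rw [SymbolicCoverAux.monomial_mem_span_pow_iff]
    exact le_trans ht' (le_of_eq (Finset.sum_congr rfl fun i _ => rfl))
end

section
/- Let I be a square-free monomial ideal of R = k[x_1,...,x_d] with I^{(n)} = ⋂_j Q_j^n over its minimal primes, and suppose Φ_m((I^{nm+j})^{1/m}) = I^{(n+1)} for all n ≥ 0, 1 ≤ j ≤ m (as established for symbolic powers). Then the R-module map R/I^{(n+1)} → R^{1/m}/(I^{(nm+j)})^{1/m} induced by the inclusion R ⊆ R^{1/m} is a split injection of R-modules, with splitting induced by Φ_m. -/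
open MvPolynomial

/-- The inclusion `R ⊆ R^{1/m}` under the identification `R^{1/m} ≅ R`
(`x_i^{1/m} ↦ x_i`) becomes the `k`-algebra map `x_i ↦ x_i^m`. -/
noncomputable def iota (k : Type*) [Field k] (d m : ℕ) :
    MvPolynomial (Fin d) k →+* MvPolynomial (Fin d) k :=
  (aeval (R := k) fun i : Fin d => X i ^ m).toRingHom

/-! On coefficients, `ι = iota` sends `x^b` to `x^{m b}` and `Φ_m = Phi` reads off the coefficient
of `x^{m b}`, so `Φ_m` is `k`-linear and `Φ_m ∘ ι = id`. Both maps descend to the quotients: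
`ι` sends each prime `Q_l = (x_i : i ∈ F_l)` into `Q_l^m`, hence `I^{(n+1)}` into
`I^{(m(n+1))} ⊆ I^{(nm+j)}`, and `Φ_m` sends `I^{(nm+j)}` into `I^{(n+1)}` by hypothesis. The
induced maps still compose to the identity, so the induced `ι` is a split injection. -/

namespace Ideal

variable {k A B : Type*} [CommRing k] [CommRing A] [CommRing B] [Algebra k A] [Algebra k B]

theorem exists_quotient_linearMap (I : Ideal A) (J : Ideal B) (φ : A →ₗ[k] B)
    (h : ∀ a ∈ I, φ a ∈ J) :
    ∃ f : (A ⧸ I) →ₗ[k] (B ⧸ J), ∀ a, f (Quotient.mk I a) = Quotient.mk J (φ a) :=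
  ⟨(Submodule.Quotient.restrictScalarsEquiv k J).toLinearMap ∘ₗ
      Submodule.mapQ (I.restrictScalars k) (J.restrictScalars k) φ h ∘ₗ
      (Submodule.Quotient.restrictScalarsEquiv k I).symm.toLinearMap,
    fun _ => rfl⟩

theorem map_iInf_pow_le {ι : Type*} (f : A →+* A) (Q : ι → Ideal A) {m : ℕ}
    (hf : ∀ l, (Q l).map f ≤ Q l ^ m) (e : ℕ) :
    (⨅ l, Q l ^ e).map f ≤ ⨅ l, Q l ^ (m * e) :=
  le_iInf fun l => calc
    (⨅ l, Q l ^ e).map f ≤ (Q l ^ e).map f := map_mono (iInf_le _ l)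
    _ = (Q l).map f ^ e := Ideal.map_pow f (Q l) e
    _ ≤ Q l ^ (m * e) := by rw [pow_mul]; exact pow_right_mono (hf l) e

end Ideal

section

variable {k : Type*} [Field k] {d m : ℕ}

theorem iota_eq_expand : iota k d m = (expand m).toRingHom := rfl

theorem iota_map_span_X_le (S : Set (Fin d)) :
    (Ideal.span (X '' S)).map (iota k d m) ≤ Ideal.span (X '' S) ^ m := by
  rw [Ideal.map_span, Ideal.span_le]
  rintro _ ⟨_, ⟨i, hi, rfl⟩, rfl⟩
  simpa [iota_eq_expand] using Ideal.pow_mem_pow (Ideal.subset_span (Set.mem_image_of_mem X hi)) m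

theorem coeff_Phi (hm : 0 < m) (p : MvPolynomial (Fin d) k) (b : Fin d →₀ ℕ) :
    coeff b (Phi k d m p) = coeff (m • b) p := by
  have hdiv (a : Fin d →₀ ℕ) (ha : ∀ i, m ∣ a i) :
      Finsupp.mapRange (· / m) (Nat.zero_div m) a = b ↔ a = m • b := by
    constructor
    · rintro rfl
      ext i
      simp [Nat.mul_div_cancel' (ha i)]
    · rintro rfl
      ext i
      simp [Nat.mul_div_cancel_left _ hm]
  simp only [Phi, coeff_sum, apply_ite (coeff b), coeff_monomial]
  rw [Finset.sum_eq_single (m • b)]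
  · simp [(hdiv _ fun i => ⟨b i, by simp⟩).mpr rfl]
  · intro a _ hne
    by_cases ha : ∀ i, m ∣ a i
    · simp [ha, (hdiv a ha).not.mpr hne]
    · simp [ha]
  · intro h
    simp [notMem_support_iff.mp h]

theorem Phi_iota (hm : 0 < m) (p : MvPolynomial (Fin d) k) : Phi k d m (iota k d m p) = p := by
  ext b
  rw [coeff_Phi hm, iota_eq_expand, AlgHom.toRingHom_eq_coe, RingHom.coe_coe,
    coeff_expand_smul m hm.ne']

variable (k d m) in
noncomputable def PhiLinearMap (hm : 0 < m) :
    MvPolynomial (Fin d) k →ₗ[k] MvPolynomial (Fin d) k where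
  toFun := Phi k d m
  map_add' p q := by ext b; simp only [coeff_Phi hm, coeff_add]
  map_smul' c p := by ext b; simp only [coeff_Phi hm, coeff_smul, RingHom.id_apply]

end

theorem quotient_split_injection_general (k : Type*) [Field k] (d s : ℕ)
    (F : Fin s → Finset (Fin d))
    (Q : Fin s → Ideal (MvPolynomial (Fin d) k))
    (hQ : ∀ l, Q l = Ideal.span (X '' (F l : Set (Fin d))))
    (symb : ℕ → Ideal (MvPolynomial (Fin d) k))
    (hsymb : ∀ n : ℕ, symb n = ⨅ l, Q l ^ n)
    (n m j : ℕ) (hm : 1 ≤ m) (hjm : j ≤ m)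
    (hPhi : Phi k d m '' ((symb (n * m + j) : Ideal (MvPolynomial (Fin d) k)) :
        Set (MvPolynomial (Fin d) k)) =
      ((symb (n + 1) : Ideal (MvPolynomial (Fin d) k)) : Set (MvPolynomial (Fin d) k))) :
    ∃ (f : (MvPolynomial (Fin d) k ⧸ symb (n + 1)) →ₗ[k]
          (MvPolynomial (Fin d) k ⧸ symb (n * m + j)))
      (g : (MvPolynomial (Fin d) k ⧸ symb (n * m + j)) →ₗ[k]
          (MvPolynomial (Fin d) k ⧸ symb (n + 1))),
      (∀ r : MvPolynomial (Fin d) k,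
        f (Ideal.Quotient.mk (symb (n + 1)) r) =
          Ideal.Quotient.mk (symb (n * m + j)) (iota k d m r)) ∧
      (∀ r : MvPolynomial (Fin d) k,
        g (Ideal.Quotient.mk (symb (n * m + j)) r) =
          Ideal.Quotient.mk (symb (n + 1)) (Phi k d m r)) ∧
      g.comp f = LinearMap.id ∧ Function.Injective f := by
  have hiota : ∀ a ∈ symb (n + 1), iota k d m a ∈ symb (n * m + j) := by
    intro a ha
    rw [hsymb] at ha ⊢
    have hexp : n * m + j ≤ m * (n + 1) := by linarith
    exact iInf_mono (fun l => Ideal.pow_le_pow_right hexp)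
      (Ideal.map_iInf_pow_le _ Q (fun l => hQ l ▸ iota_map_span_X_le _) _
        (Ideal.mem_map_of_mem _ ha))
  obtain ⟨f, hf⟩ := Ideal.exists_quotient_linearMap (symb (n + 1)) (symb (n * m + j))
    (expand m).toLinearMap hiota
  obtain ⟨g, hg⟩ := Ideal.exists_quotient_linearMap (symb (n * m + j)) (symb (n + 1))
    (PhiLinearMap k d m hm) fun a ha => hPhi.subset (Set.mem_image_of_mem _ ha)
  have hgf : ∀ x, g (f x) = x := by
    intro x
    obtain ⟨r, rfl⟩ := Ideal.Quotient.mk_surjective x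
    rw [hf, hg]
    exact congrArg _ (Phi_iota hm r)
  exact ⟨f, g, hf, hg, LinearMap.ext hgf, Function.LeftInverse.injective hgf⟩

/-- let `I` be a square-free monomial ideal with minimal primes
`Q_1,…,Q_s` and symbolic powers `I^{(n)} = ⋂_l Q_l^n`, and assume
`Φ_m((I^{(nm+j)})^{1/m}) = I^{(n+1)}` for our `n ≥ 0`, `m ≥ 1`, `1 ≤ j ≤ m`. Then the
natural map `R/I^{(n+1)} → R^{1/m}/(I^{(nm+j)})^{1/m}` induced by the inclusion
`R ⊆ R^{1/m}` (i.e. by `iota`) is a split injection, with splitting induced by `Φ_m`. -/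
theorem quotient_split_injection (k : Type*) [Field k] (d s : ℕ)
    (F : Fin s → Finset (Fin d))
    (Q : Fin s → Ideal (MvPolynomial (Fin d) k))
    (hQ : ∀ l, Q l = Ideal.span (X '' (F l : Set (Fin d))))
    (I : Ideal (MvPolynomial (Fin d) k)) (hI : I = ⨅ l, Q l)
    (symb : ℕ → Ideal (MvPolynomial (Fin d) k))
    (hsymb : ∀ n : ℕ, symb n = ⨅ l, Q l ^ n)
    (n m j : ℕ) (hm : 1 ≤ m) (hj1 : 1 ≤ j) (hjm : j ≤ m)
    (hPhi : Phi k d m '' ((symb (n * m + j) : Ideal (MvPolynomial (Fin d) k)) :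
        Set (MvPolynomial (Fin d) k)) =
      ((symb (n + 1) : Ideal (MvPolynomial (Fin d) k)) : Set (MvPolynomial (Fin d) k))) :
    ∃ (f : (MvPolynomial (Fin d) k ⧸ symb (n + 1)) →ₗ[k]
          (MvPolynomial (Fin d) k ⧸ symb (n * m + j)))
      (g : (MvPolynomial (Fin d) k ⧸ symb (n * m + j)) →ₗ[k]
          (MvPolynomial (Fin d) k ⧸ symb (n + 1))),
      (∀ r : MvPolynomial (Fin d) k,
        f (Ideal.Quotient.mk (symb (n + 1)) r) =
          Ideal.Quotient.mk (symb (n * m + j)) (iota k d m r)) ∧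
      (∀ r : MvPolynomial (Fin d) k,
        g (Ideal.Quotient.mk (symb (n * m + j)) r) =
          Ideal.Quotient.mk (symb (n + 1)) (Phi k d m r)) ∧
      g.comp f = LinearMap.id ∧ Function.Injective f :=
  quotient_split_injection_general k d s F Q hQ symb hsymb n m j hm hjm hPhi
end
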